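/- arXiv:2412.20627 — 4 statements merged into one kernel-verified Lean document; each statement's English description precedes it below -/
import Mathlib

section
/- Let D ⊆ ℝ² be a nonempty open convex set and let P : D → ℝ be real-analytic such that the Hessian ∇²P(z) is positive definite for every z ∈ D (in particular P is strictly convex on D). Let x ∈ ℝ² with x ≠ 0, let 0 < a < b, and let z : (a, b) → D be a differentiable map satisfying ∇P(z(t)) = x/t for all t ∈ (a, b). Define h(t) = t·P(z(t)) − ⟨x, z(t)⟩. Then h is twice differentiable on (a, b) with h''(t) = −(1/t³)·⟨x, (∇²P(z(t)))⁻¹ x⟩ < 0 for every t ∈ (a, b); in particular h is strictly concave on (a, b). -/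
/-!
Since `∇P(z(t)) = x/t`, the chain-rule terms in `h'(t)` cancel and `h'(t) = P(z(t))`.
Differentiating once more gives `h''(t) = ⟨∇P(z(t)), z'(t)⟩ = t⁻¹ ⟨x, z'(t)⟩`, while differentiating
the identity `∇P(z(t)) = x/t` gives `∇²P(z(t)) z'(t) = -x/t²`. Hence
`h''(t) = -t⁻³ ⟨x, (∇²P(z(t)))⁻¹ x⟩`, which is negative because the inverse of a positive definite
operator is positive definite.
-/

open InnerProductSpace Filter Topology

namespace ContinuousLinearMap

variable {E : Type*} [NormedAddCommGroup E] [InnerProductSpace ℝ E] [FiniteDimensional ℝ E]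

theorem isInvertible_of_forall_inner_pos {H : E →L[ℝ] E} (hH : ∀ v ≠ 0, 0 < ⟪H v, v⟫_ℝ) :
    H.IsInvertible := by
  have hinj : Function.Injective H := by
    refine (injective_iff_map_eq_zero H).2 fun v hv => ?_
    by_contra hv0
    simpa [hv] using hH v hv0
  exact ⟨(LinearEquiv.ofInjectiveEndo (H : E →ₗ[ℝ] E) hinj).toContinuousLinearEquiv, rfl⟩

theorem inner_inverse_pos_of_forall_inner_pos {H : E →L[ℝ] E} (hH : ∀ v ≠ 0, 0 < ⟪H v, v⟫_ℝ)
    {x : E} (hx : x ≠ 0) : 0 < ⟪x, H.inverse x⟫_ℝ := by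
  have hHinv := isInvertible_of_forall_inner_pos hH
  have hw : H.inverse x ≠ 0 := fun h0 => hx <| by rw [← hHinv.self_apply_inverse x, h0, map_zero]
  simpa [hHinv.self_apply_inverse] using hH _ hw

end ContinuousLinearMap

section Gradient

variable {E : Type*} [NormedAddCommGroup E] [InnerProductSpace ℝ E] [CompleteSpace E]

theorem inner_fderiv_gradient_apply (P : E → ℝ) (y v w : E) :
    ⟪fderiv ℝ (gradient P) y v, w⟫_ℝ = iteratedFDeriv ℝ 2 P y ![v, w] := by
  rw [iteratedFDeriv_two_apply, ← toDual_comp_gradient, LinearIsometryEquiv.comp_fderiv]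
  simp [← toDual_apply_apply]

theorem AnalyticAt.differentiableAt_gradient {P : E → ℝ} {y : E} (hP : AnalyticAt ℝ P y) :
    DifferentiableAt ℝ (gradient P) y :=
  (toDual ℝ E).symm.toContinuousLinearEquiv.differentiableAt.comp y hP.fderiv.differentiableAt

variable {P : E → ℝ} {z : ℝ → E} {x z' : E} {t : ℝ}

theorem DifferentiableAt.hasDerivAt_comp_inner_gradient (hP : DifferentiableAt ℝ P (z t))
    (hz : HasDerivAt z z' t) : HasDerivAt (fun s => P (z s)) ⟪gradient P (z t), z'⟫_ℝ t := by
  rw [inner_gradient_left]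
  exact hP.hasFDerivAt.comp_hasDerivAt t hz

theorem hasDerivAt_mul_comp_sub_inner (ht : t ≠ 0) (hP : DifferentiableAt ℝ P (z t))
    (hz : HasDerivAt z z' t) (hgrad : gradient P (z t) = t⁻¹ • x) :
    HasDerivAt (fun s => s * P (z s) - ⟪x, z s⟫_ℝ) (P (z t)) t := by
  have hPz := hP.hasDerivAt_comp_inner_gradient hz
  have hxz : HasDerivAt (fun s => ⟪x, z s⟫_ℝ) ⟪x, z'⟫_ℝ t :=
    (innerSL ℝ x).hasFDerivAt.comp_hasDerivAt t hz
  refine (((hasDerivAt_id t).mul hPz).sub hxz).congr_deriv ?_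
  rw [hgrad, real_inner_smul_left, id, mul_inv_cancel_left₀ ht]
  ring

theorem HasDerivAt.eq_neg_inverse_of_gradient_eq_inv_smul {H : E →L[ℝ] E} (ht : t ≠ 0)
    (hH : H.IsInvertible) (hgradP : HasFDerivAt (gradient P) H (z t)) (hz : HasDerivAt z z' t)
    (hgrad : ∀ᶠ s in 𝓝 t, gradient P (z s) = s⁻¹ • x) :
    z' = -(t ^ 2)⁻¹ • H.inverse x := by
  have hHz' : H z' = -(t ^ 2)⁻¹ • x :=
    ((hgradP.comp_hasDerivAt t hz).congr_of_eventuallyEq (hgrad.mono fun _ h => h.symm)).unique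
      ((hasDerivAt_inv ht).smul_const x)
  rw [← map_smul, ← hHz', hH.inverse_apply_self]

theorem hasDerivAt_comp_of_gradient_eq_inv_smul {H : E →L[ℝ] E} (ht : t ≠ 0)
    (hH : H.IsInvertible) (hP : DifferentiableAt ℝ P (z t))
    (hgradP : HasFDerivAt (gradient P) H (z t)) (hz : HasDerivAt z z' t)
    (hgrad : ∀ᶠ s in 𝓝 t, gradient P (z s) = s⁻¹ • x) :
    HasDerivAt (fun s => P (z s)) (-(1 / t ^ 3) * ⟪x, H.inverse x⟫_ℝ) t := by
  refine (hP.hasDerivAt_comp_inner_gradient hz).congr_deriv ?_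
  rw [hz.eq_neg_inverse_of_gradient_eq_inv_smul ht hH hgradP hgrad, hgrad.self_of_nhds,
    real_inner_smul_left, real_inner_smul_right]
  field_simp

end Gradient


theorem stmt_7_general (D : Set (EuclideanSpace ℝ (Fin 2)))
    (P : EuclideanSpace ℝ (Fin 2) → ℝ) (hP : AnalyticOnNhd ℝ P D)
    (hHess : ∀ z ∈ D, ∀ v : EuclideanSpace ℝ (Fin 2), v ≠ 0 →
      0 < iteratedFDeriv ℝ 2 P z ![v, v])
    (x : EuclideanSpace ℝ (Fin 2)) (hx : x ≠ 0)
    (a b : ℝ) (ha : 0 < a)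
    (z : ℝ → EuclideanSpace ℝ (Fin 2))
    (hzD : ∀ t ∈ Set.Ioo a b, z t ∈ D)
    (hzdiff : ∀ t ∈ Set.Ioo a b, DifferentiableAt ℝ z t)
    (hgrad : ∀ t ∈ Set.Ioo a b, gradient P (z t) = t⁻¹ • x) :
    (∀ t ∈ Set.Ioo a b,
      DifferentiableAt ℝ (fun s => s * P (z s) - (inner ℝ x (z s) : ℝ)) t) ∧
    (∀ t ∈ Set.Ioo a b,
      HasDerivAt (deriv (fun s => s * P (z s) - (inner ℝ x (z s) : ℝ)))
        (-(1 / t ^ 3) *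
          (inner ℝ x ((fderiv ℝ (gradient P) (z t)).inverse x) : ℝ)) t ∧
      -(1 / t ^ 3) * (inner ℝ x ((fderiv ℝ (gradient P) (z t)).inverse x) : ℝ) < 0) ∧
    StrictConcaveOn ℝ (Set.Ioo a b)
      (fun s => s * P (z s) - (inner ℝ x (z s) : ℝ)) := by
  set h : ℝ → ℝ := fun s => s * P (z s) - (inner ℝ x (z s) : ℝ)
  have hzero : ∀ t ∈ Set.Ioo a b, t ≠ 0 := fun t ht => (ha.trans ht.1).ne'
  have hPan : ∀ t ∈ Set.Ioo a b, AnalyticAt ℝ P (z t) := fun t ht => hP _ (hzD t ht)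
  have hderiv : ∀ t ∈ Set.Ioo a b, HasDerivAt h (P (z t)) t := fun t ht =>
    hasDerivAt_mul_comp_sub_inner (hzero t ht) (hPan t ht).differentiableAt
      (hzdiff t ht).hasDerivAt (hgrad t ht)
  have hderiv2 : ∀ t ∈ Set.Ioo a b, HasDerivAt (deriv h)
      (-(1 / t ^ 3) * ⟪x, (fderiv ℝ (gradient P) (z t)).inverse x⟫_ℝ) t ∧
      -(1 / t ^ 3) * ⟪x, (fderiv ℝ (gradient P) (z t)).inverse x⟫_ℝ < 0 := by
    intro t ht
    have hpos : ∀ v ≠ 0, 0 < ⟪fderiv ℝ (gradient P) (z t) v, v⟫_ℝ := fun v hv => by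
      rw [inner_fderiv_gradient_apply]
      exact hHess _ (hzD t ht) v hv
    have hderiv_eq : deriv h =ᶠ[𝓝 t] fun s => P (z s) :=
      eventually_of_mem (isOpen_Ioo.mem_nhds ht) fun s hs => (hderiv s hs).deriv
    refine ⟨(hasDerivAt_comp_of_gradient_eq_inv_smul (hzero t ht)
      (ContinuousLinearMap.isInvertible_of_forall_inner_pos hpos) (hPan t ht).differentiableAt
      (hPan t ht).differentiableAt_gradient.hasFDerivAt (hzdiff t ht).hasDerivAt
      (eventually_of_mem (isOpen_Ioo.mem_nhds ht) hgrad)).congr_of_eventuallyEq hderiv_eq, ?_⟩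
    have ht3 : 0 < 1 / t ^ 3 := by have := ha.trans ht.1; positivity
    exact mul_neg_of_neg_of_pos (neg_neg_of_pos ht3)
      (ContinuousLinearMap.inner_inverse_pos_of_forall_inner_pos hpos hx)
  refine ⟨fun t ht => (hderiv t ht).differentiableAt, hderiv2, ?_⟩
  refine strictConcaveOn_of_deriv2_neg' (convex_Ioo a b)
    (fun t ht => (hderiv t ht).continuousAt.continuousWithinAt) fun t ht => ?_
  rw [Function.iterate_succ_apply, Function.iterate_one, (hderiv2 t ht).1.deriv]
  exact (hderiv2 t ht).2

/-- **Second derivative identity and concavity of Lemma 2.9.**  Let `P` be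
real-analytic with positive definite Hessian on a nonempty open convex `D ⊆ ℝ²`,
let `x ∈ ℝ²` be nonzero, `0 < a < b`, and `z : (a,b) → D` differentiable with
`∇P(z(t)) = x/t`.  Then `h(t) = t·P(z(t)) − ⟨x, z(t)⟩` is twice differentiable on
`(a,b)` with `h''(t) = −(1/t³)·⟨x, (∇²P(z(t)))⁻¹ x⟩ < 0`; in particular `h` is
strictly concave on `(a,b)`. -/
theorem stmt_7 (D : Set (EuclideanSpace ℝ (Fin 2)))
    (hne : D.Nonempty) (hopen : IsOpen D) (hconv : Convex ℝ D)
    (P : EuclideanSpace ℝ (Fin 2) → ℝ) (hP : AnalyticOnNhd ℝ P D)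
    (hHess : ∀ z ∈ D, ∀ v : EuclideanSpace ℝ (Fin 2), v ≠ 0 →
      0 < iteratedFDeriv ℝ 2 P z ![v, v])
    (x : EuclideanSpace ℝ (Fin 2)) (hx : x ≠ 0)
    (a b : ℝ) (ha : 0 < a) (hab : a < b)
    (z : ℝ → EuclideanSpace ℝ (Fin 2))
    (hzD : ∀ t ∈ Set.Ioo a b, z t ∈ D)
    (hzdiff : ∀ t ∈ Set.Ioo a b, DifferentiableAt ℝ z t)
    (hgrad : ∀ t ∈ Set.Ioo a b, gradient P (z t) = t⁻¹ • x) :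
    (∀ t ∈ Set.Ioo a b,
      DifferentiableAt ℝ (fun s => s * P (z s) - (inner ℝ x (z s) : ℝ)) t) ∧
    (∀ t ∈ Set.Ioo a b,
      HasDerivAt (deriv (fun s => s * P (z s) - (inner ℝ x (z s) : ℝ)))
        (-(1 / t ^ 3) *
          (inner ℝ x ((fderiv ℝ (gradient P) (z t)).inverse x) : ℝ)) t ∧
      -(1 / t ^ 3) * (inner ℝ x ((fderiv ℝ (gradient P) (z t)).inverse x) : ℝ) < 0) ∧
    StrictConcaveOn ℝ (Set.Ioo a b)
      (fun s => s * P (z s) - (inner ℝ x (z s) : ℝ)) :=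
  stmt_7_general D P hP hHess x hx a b ha z hzD hzdiff hgrad
end

section
/- Let D ⊆ ℝ² be a nonempty open convex set and let P : D → ℝ be real-analytic such that the Hessian ∇²P(z) is positive definite for every z ∈ D (in particular P is strictly convex on D). Let x ∈ ℝ² with x ≠ 0, let 0 < a < b, and let z : (a, b) → D be a differentiable map satisfying ∇P(z(t)) = x/t for all t ∈ (a, b). Define h(t) = t·P(z(t)) − ⟨x, z(t)⟩. If t₀ ∈ (a, b) satisfies P(z(t₀)) = 0, then h attains a strict global maximum on (a, b) at t₀, i.e. h(t) < h(t₀) for all t ∈ (a, b) with t ≠ t₀. -/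
/-!
Strict convexity of `P` (positive Hessian along every segment) puts `P` strictly above its
tangent planes. At `z t` the gradient is `x / t`, so the tangent inequality there, evaluated at
`z t₀ ≠ z t` (the gradients `x / t` and `x / t₀` differ) and multiplied by `t > 0`, reads
`t P(z t) - ⟨x, z t⟩ < t P(z t₀) - ⟨x, z t₀⟩`, and the right-hand side is `h t₀` because
`P (z t₀) = 0`.
-/

open Set

section LineRestriction

variable {E : Type*} [NormedAddCommGroup E] [NormedSpace ℝ E] {P : E → ℝ} {w v : E} {s : ℝ}

lemma hasDerivAt_line : HasDerivAt (fun s : ℝ => w + s • v) v s := by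
  simpa using ((hasDerivAt_id s).smul_const v).const_add w

lemma hasDerivAt_comp_line (hP : DifferentiableAt ℝ P (w + s • v)) :
    HasDerivAt (fun s => P (w + s • v)) (fderiv ℝ P (w + s • v) v) s :=
  hP.hasFDerivAt.comp_hasDerivAt s hasDerivAt_line

lemma hasDerivAt_fderiv_comp_line (hP : DifferentiableAt ℝ (fderiv ℝ P) (w + s • v)) :
    HasDerivAt (fun s => fderiv ℝ P (w + s • v) v)
      (iteratedFDeriv ℝ 2 P (w + s • v) ![v, v]) s := by
  have := (ContinuousLinearMap.apply ℝ ℝ v).hasFDerivAt.comp_hasDerivAt s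
    (hP.hasFDerivAt.comp_hasDerivAt s hasDerivAt_line)
  simpa [iteratedFDeriv_two_apply, Function.comp_def] using this

lemma strictConvexOn_comp_line
    (hP : ∀ s ∈ Icc (0 : ℝ) 1, ContDiffAt ℝ 2 P (w + s • v))
    (hHess : ∀ s ∈ Ioo (0 : ℝ) 1, 0 < iteratedFDeriv ℝ 2 P (w + s • v) ![v, v]) :
    StrictConvexOn ℝ (Icc (0 : ℝ) 1) (fun s => P (w + s • v)) := by
  have hdiff : ∀ s ∈ Icc (0 : ℝ) 1, DifferentiableAt ℝ P (w + s • v) := fun s hs =>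
    (hP s hs).differentiableAt (by norm_num)
  have hderiv : EqOn (deriv fun s => P (w + s • v)) (fun s => fderiv ℝ P (w + s • v) v)
      (Ioo (0 : ℝ) 1) := fun s hs =>
    (hasDerivAt_comp_line (hdiff s (Ioo_subset_Icc_self hs))).deriv
  refine strictConvexOn_of_deriv2_pos (convex_Icc 0 1)
    (fun s hs => (hasDerivAt_comp_line (hdiff s hs)).continuousAt.continuousWithinAt) ?_
  intro s hs
  rw [interior_Icc] at hs
  have hfderiv : DifferentiableAt ℝ (fderiv ℝ P) (w + s • v) :=
    ((hP s (Ioo_subset_Icc_self hs)).fderiv_right (m := 1) (by norm_num)).differentiableAt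
      (by norm_num)
  rw [Function.iterate_succ_apply, Function.iterate_one,
    (hderiv.eventuallyEq_of_mem (isOpen_Ioo.mem_nhds hs)).deriv_eq,
    (hasDerivAt_fderiv_comp_line hfderiv).deriv]
  exact hHess s hs

end LineRestriction

variable {E : Type*} [NormedAddCommGroup E] [NormedSpace ℝ E] {D : Set E} {P : E → ℝ}

theorem add_fderiv_lt_of_iteratedFDeriv_two_pos (hopen : IsOpen D) (hconv : Convex ℝ D)
    (hP : ContDiffOn ℝ 2 P D)
    (hHess : ∀ z ∈ D, ∀ v : E, v ≠ 0 → 0 < iteratedFDeriv ℝ 2 P z ![v, v])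
    {w y : E} (hw : w ∈ D) (hy : y ∈ D) (hwy : w ≠ y) :
    P w + fderiv ℝ P w (y - w) < P y := by
  have hseg : ∀ s ∈ Icc (0 : ℝ) 1, w + s • (y - w) ∈ D := fun s hs =>
    hconv.add_smul_sub_mem hw hy hs
  have hconvex := strictConvexOn_comp_line
    (fun s hs => hP.contDiffAt (hopen.mem_nhds (hseg s hs)))
    (fun s hs => hHess _ (hseg s (Ioo_subset_Icc_self hs)) _ (sub_ne_zero.2 hwy.symm))
  have hdiff0 : DifferentiableAt ℝ P (w + (0 : ℝ) • (y - w)) :=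
    (hP.contDiffAt (hopen.mem_nhds (hseg 0 (by simp)))).differentiableAt (by norm_num)
  have := hconvex.lt_slope_of_hasDerivAt (by simp) (by simp) zero_lt_one
    (hasDerivAt_comp_line hdiff0)
  simp only [slope_def_field, zero_smul, add_zero, one_smul, add_sub_cancel, sub_zero,
    div_one] at this
  linarith

lemma fderiv_apply_eq_inner_gradient {F : Type*} [NormedAddCommGroup F] [InnerProductSpace ℝ F]
    [CompleteSpace F] (f : F → ℝ) (x u : F) : fderiv ℝ f x u = inner ℝ (gradient f x) u := by
  rw [← toDual_gradient, InnerProductSpace.toDual_apply_apply]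

theorem stmt_8_general (D : Set (EuclideanSpace ℝ (Fin 2)))
    (hopen : IsOpen D) (hconv : Convex ℝ D)
    (P : EuclideanSpace ℝ (Fin 2) → ℝ) (hP : AnalyticOnNhd ℝ P D)
    (hHess : ∀ z ∈ D, ∀ v : EuclideanSpace ℝ (Fin 2), v ≠ 0 →
      0 < iteratedFDeriv ℝ 2 P z ![v, v])
    (x : EuclideanSpace ℝ (Fin 2)) (hx : x ≠ 0)
    (a b : ℝ) (ha : 0 < a)
    (z : ℝ → EuclideanSpace ℝ (Fin 2))
    (hzD : ∀ t ∈ Set.Ioo a b, z t ∈ D)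
    (hgrad : ∀ t ∈ Set.Ioo a b, gradient P (z t) = t⁻¹ • x)
    (t₀ : ℝ) (ht₀ : t₀ ∈ Set.Ioo a b) (hP0 : P (z t₀) = 0) :
    ∀ t ∈ Set.Ioo a b, t ≠ t₀ →
      t * P (z t) - (inner ℝ x (z t) : ℝ) <
        t₀ * P (z t₀) - (inner ℝ x (z t₀) : ℝ) := by
  intro t ht htt₀
  have ht_pos : 0 < t := ha.trans ht.1
  have hz_ne : z t ≠ z t₀ := by
    intro heq
    have hinv : t⁻¹ • x = t₀⁻¹ • x := by rw [← hgrad t ht, heq, hgrad t₀ ht₀]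
    exact htt₀ (inv_injective (smul_left_injective ℝ hx hinv))
  have htangent := add_fderiv_lt_of_iteratedFDeriv_two_pos hopen hconv
    hP.contDiffOn_of_completeSpace hHess (hzD t ht) (hzD t₀ ht₀) hz_ne
  rw [fderiv_apply_eq_inner_gradient, hgrad t ht, real_inner_smul_left, inner_sub_right,
    hP0] at htangent
  have hscaled := mul_lt_mul_of_pos_left htangent ht_pos
  rw [mul_add, ← mul_assoc, mul_inv_cancel₀ ht_pos.ne', one_mul, mul_zero] at hscaled
  rw [hP0]
  linarith

/-- **Corollary 2.13 (4).**  Let `P` be real-analytic with positive definite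
Hessian on a nonempty open convex `D ⊆ ℝ²`, let `x ∈ ℝ²` be nonzero,
`0 < a < b`, and `z : (a,b) → D` differentiable with `∇P(z(t)) = x/t`.  Set
`h(t) = t·P(z(t)) − ⟨x, z(t)⟩`.  If `t₀ ∈ (a,b)` satisfies `P(z(t₀)) = 0`, then
`h` attains a strict global maximum on `(a,b)` at `t₀`. -/
theorem stmt_8 (D : Set (EuclideanSpace ℝ (Fin 2)))
    (hne : D.Nonempty) (hopen : IsOpen D) (hconv : Convex ℝ D)
    (P : EuclideanSpace ℝ (Fin 2) → ℝ) (hP : AnalyticOnNhd ℝ P D)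
    (hHess : ∀ z ∈ D, ∀ v : EuclideanSpace ℝ (Fin 2), v ≠ 0 →
      0 < iteratedFDeriv ℝ 2 P z ![v, v])
    (x : EuclideanSpace ℝ (Fin 2)) (hx : x ≠ 0)
    (a b : ℝ) (ha : 0 < a) (hab : a < b)
    (z : ℝ → EuclideanSpace ℝ (Fin 2))
    (hzD : ∀ t ∈ Set.Ioo a b, z t ∈ D)
    (hzdiff : ∀ t ∈ Set.Ioo a b, DifferentiableAt ℝ z t)
    (hgrad : ∀ t ∈ Set.Ioo a b, gradient P (z t) = t⁻¹ • x)
    (t₀ : ℝ) (ht₀ : t₀ ∈ Set.Ioo a b) (hP0 : P (z t₀) = 0) :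
    ∀ t ∈ Set.Ioo a b, t ≠ t₀ →
      t * P (z t) - (inner ℝ x (z t) : ℝ) <
        t₀ * P (z t₀) - (inner ℝ x (z t₀) : ℝ) :=
  stmt_8_general D hopen hconv P hP hHess x hx a b ha z hzD hgrad t₀ ht₀ hP0
end

section
/- Let I ⊆ ℝ be an open interval interval, let q : I → ℝ be twice differentiable with q''(s) > 0 and q'(s) < 0 for all s ∈ I, and let α, β > 0. Define F(s) = (s·q'(s) − q(s)) / (α·q'(s) − β). Then: (i) F is differentiable on I with F'(s) = q''(s)·(α·q(s) − β·s) / (α·q'(s) − β)² for all s ∈ I; and (ii) if s₀ ∈ I satisfies α·q(s₀) = β·s₀, then F(s) < F(s₀) for every s ∈ I with s ≠ s₀. -/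
/-!
Both claims come from the quotient rule: the numerator of `F'` is
`q''·((α q' − β)·s − α (s q' − q)) = q''·(α q − β s)`.  Since `q' < 0`, the map
`g(s) = α q(s) − β s` has derivative `α q' − β < 0`, so it is strictly decreasing and changes
sign exactly once, at its zero `s₀`, from positive to negative.  Hence `F` increases to the
left of `s₀` and decreases to its right, and `s₀` is a strict global maximum of `F` on `I`.
-/

open Set

theorem hasDerivAt_mul_sub_div_mul_sub {q p : ℝ → ℝ} {r α β s : ℝ}
    (hq : HasDerivAt q (p s) s) (hp : HasDerivAt p r s) (hden : α * p s - β ≠ 0) :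
    HasDerivAt (fun u => (u * p u - q u) / (α * p u - β))
      (r * (α * q s - β * s) / (α * p s - β) ^ 2) s := by
  have hnum : HasDerivAt (fun u => u * p u - q u) (s * r) s :=
    (((hasDerivAt_id' s).mul hp).sub hq).congr_deriv (by ring)
  exact (hnum.div ((hp.const_mul α).sub_const β) hden).congr_deriv (by ring)

theorem lt_of_deriv_pos_of_deriv_neg {I : Set ℝ} (hI : I.OrdConnected) {f : ℝ → ℝ}
    (hf : ∀ x ∈ I, DifferentiableAt ℝ f x) {x₀ : ℝ} (hx₀ : x₀ ∈ I)
    (hpos : ∀ x ∈ I, x < x₀ → 0 < deriv f x) (hneg : ∀ x ∈ I, x₀ < x → deriv f x < 0)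
    {x : ℝ} (hx : x ∈ I) (hne : x ≠ x₀) : f x < f x₀ := by
  have hcont : ∀ J ⊆ I, ContinuousOn f J := fun J hJ y hy =>
    (hf y (hJ hy)).continuousAt.continuousWithinAt
  rcases hne.lt_or_gt with hlt | hgt
  · have hsub : Icc x x₀ ⊆ I := hI.out hx hx₀
    refine strictMonoOn_of_deriv_pos (convex_Icc x x₀) (hcont _ hsub) (fun y hy => ?_)
      (left_mem_Icc.2 hlt.le) (right_mem_Icc.2 hlt.le) hlt
    rw [interior_Icc] at hy
    exact hpos y (hsub (Ioo_subset_Icc_self hy)) hy.2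
  · have hsub : Icc x₀ x ⊆ I := hI.out hx₀ hx
    refine strictAntiOn_of_deriv_neg (convex_Icc x₀ x) (hcont _ hsub) (fun y hy => ?_)
      (left_mem_Icc.2 hgt.le) (right_mem_Icc.2 hgt.le) hgt
    rw [interior_Icc] at hy
    exact hneg y (hsub (Ioo_subset_Icc_self hy)) hy.1

theorem stmt_9_general (I : Set ℝ) (hIconn : I.OrdConnected)
    (q : ℝ → ℝ)
    (hq1 : ∀ s ∈ I, DifferentiableAt ℝ q s)
    (hq2 : ∀ s ∈ I, DifferentiableAt ℝ (deriv q) s)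
    (hq'' : ∀ s ∈ I, 0 < deriv (deriv q) s)
    (hq' : ∀ s ∈ I, deriv q s < 0)
    (α β : ℝ) (hα : 0 < α) (hβ : 0 < β) :
    (∀ s ∈ I,
      HasDerivAt (fun u => (u * deriv q u - q u) / (α * deriv q u - β))
        (deriv (deriv q) s * (α * q s - β * s) / (α * deriv q s - β) ^ 2) s) ∧
    (∀ s₀ ∈ I, α * q s₀ = β * s₀ → ∀ s ∈ I, s ≠ s₀ →
      (s * deriv q s - q s) / (α * deriv q s - β) <
        (s₀ * deriv q s₀ - q s₀) / (α * deriv q s₀ - β)) := by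
  have hden : ∀ s ∈ I, α * deriv q s - β < 0 := fun s hs => by nlinarith [hq' s hs]
  have hF : ∀ s ∈ I, HasDerivAt (fun u => (u * deriv q u - q u) / (α * deriv q u - β))
      (deriv (deriv q) s * (α * q s - β * s) / (α * deriv q s - β) ^ 2) s := fun s hs =>
    hasDerivAt_mul_sub_div_mul_sub (hq1 s hs).hasDerivAt (hq2 s hs).hasDerivAt (hden s hs).ne
  have hg : ∀ s ∈ I, HasDerivAt (fun u => α * q u - β * u) (α * deriv q s - β) s := fun s hs =>
    (((hq1 s hs).hasDerivAt.const_mul α).sub ((hasDerivAt_id' s).const_mul β)).congr_deriv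
      (by ring)
  have hg_anti : StrictAntiOn (fun u => α * q u - β * u) I :=
    strictAntiOn_of_deriv_neg hIconn.convex
      (fun s hs => (hg s hs).continuousAt.continuousWithinAt)
      (fun s hs => (hg s (interior_subset hs)).deriv ▸ hden s (interior_subset hs))
  refine ⟨hF, fun s₀ hs₀ hroot s hs hne => ?_⟩
  refine lt_of_deriv_pos_of_deriv_neg hIconn (fun x hx => (hF x hx).differentiableAt) hs₀
    (fun x hx hlt => ?_) (fun x hx hgt => ?_) hs hne
  · have hgx : α * q s₀ - β * s₀ < α * q x - β * x := hg_anti hx hs₀ hlt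
    rw [(hF x hx).deriv]
    exact div_pos (mul_pos (hq'' x hx) (by linarith)) (sq_pos_of_neg (hden x hx))
  · have hgx : α * q x - β * x < α * q s₀ - β * s₀ := hg_anti hs₀ hx hgt
    rw [(hF x hx).deriv]
    exact div_neg_of_neg_of_pos (mul_neg_of_pos_of_neg (hq'' x hx) (by linarith))
      (sq_pos_of_neg (hden x hx))

/-- **Optimization step in the proof of Theorem D.**  Let `I ⊆ ℝ` be an open
interval, `q : I → ℝ` twice differentiable with `q'' > 0` and `q' < 0` on `I`,
and `α, β > 0`.  With `F(s) = (s·q'(s) − q(s))/(α·q'(s) − β)`: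
(i) `F'(s) = q''(s)·(α·q(s) − β·s)/(α·q'(s) − β)²` on `I`; and
(ii) if `s₀ ∈ I` satisfies `α·q(s₀) = β·s₀`, then `F(s) < F(s₀)` for all
`s ∈ I`, `s ≠ s₀`. -/
theorem stmt_9 (I : Set ℝ) (hIopen : IsOpen I) (hIconn : I.OrdConnected)
    (q : ℝ → ℝ)
    (hq1 : ∀ s ∈ I, DifferentiableAt ℝ q s)
    (hq2 : ∀ s ∈ I, DifferentiableAt ℝ (deriv q) s)
    (hq'' : ∀ s ∈ I, 0 < deriv (deriv q) s)
    (hq' : ∀ s ∈ I, deriv q s < 0)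
    (α β : ℝ) (hα : 0 < α) (hβ : 0 < β) :
    (∀ s ∈ I,
      HasDerivAt (fun u => (u * deriv q u - q u) / (α * deriv q u - β))
        (deriv (deriv q) s * (α * q s - β * s) / (α * deriv q s - β) ^ 2) s) ∧
    (∀ s₀ ∈ I, α * q s₀ = β * s₀ → ∀ s ∈ I, s ≠ s₀ →
      (s * deriv q s - q s) / (α * deriv q s - β) <
        (s₀ * deriv q s₀ - q s₀) / (α * deriv q s₀ - β)) :=
  stmt_9_general I hIconn q hq1 hq2 hq'' hq' α β hα hβ
end

section
/- Let 𝒜 be a countable set and T : 𝒜 × 𝒜 → {0,1} a transition matrix, with one-sided countable state Markov shift Σ⁺ and left shift σ. Let f, g : Σ⁺ → ℝ be (A,β)-locally Hölder potentials, write S_n𝐟(x) = (S_n f(x), S_n g(x)), fix k ≥ 1, and for each k-cylinder p choose a non-periodic point z_p ∈ p. Set ε_k = A·e^{−βk}/(1 − e^{−β}). For an open rectangle U = (u₁,u₂)×(u₃,u₄) and ε > 0 write U_{+ε} = (u₁−ε, u₂+ε)×(u₃−ε, u₄+ε) and U_{−ε} = (u₁+ε, u₂−ε)×(u₃+ε,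 u₄−ε). Define the counts (in ℕ ∪ {∞}) M(n,U) = #{x ∈ Fixⁿ : S_n𝐟(x) ∈ U} and W(n,U) = Σ_{p ∈ Λ_k} #{y ∈ p ∩ σ^{−n}(z_p) : S_n𝐟(y) ∈ U}, where Λ_k is the set of all k-cylinders. Then for every n ≥ k and every open rectangle U, W(n, U_{−ε_k}) ≤ M(n, U) ≤ W(n, U_{+ε_k}). -/
/-- The one-sided countable state Markov shift associated with the transition
matrix `T` (indexing sequences by `ℕ`, i.e. the `i`-th letter of the paper,
`1 ≤ i`, is `x (i-1)` here). -/
def shiftSpace {𝒜 : Type*} (T : 𝒜 → 𝒜 → Prop) : Set (ℕ → 𝒜) :=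
  {x | ∀ n, T (x n) (x (n + 1))}

/-- The left shift map. -/
def shiftMap {𝒜 : Type*} : (ℕ → 𝒜) → ℕ → 𝒜 := fun x n => x (n + 1)

/-- The `k`-cylinder determined by the word `a : Fin k → 𝒜`. -/
def cylinder {𝒜 : Type*} (T : 𝒜 → 𝒜 → Prop) (k : ℕ) (a : Fin k → 𝒜) : Set (ℕ → 𝒜) :=
  {x ∈ shiftSpace T | ∀ i : Fin k, x i.val = a i}

/-- `f` is `(A,β)`-locally Hölder: `|f(x) − f(y)| ≤ A e^{−βm}` whenever the first
`m ≥ 1` letters of `x` and `y` agree. -/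
def LocallyHolder {𝒜 : Type*} (T : 𝒜 → 𝒜 → Prop) (A β : ℝ)
    (f : (ℕ → 𝒜) → ℝ) : Prop :=
  ∀ m : ℕ, 1 ≤ m → ∀ x ∈ shiftSpace T, ∀ y ∈ shiftSpace T,
    (∀ i < m, x i = y i) → |f x - f y| ≤ A * Real.exp (-β * m)

/-- The `n`-th ergodic sum `S_n f(x) = Σ_{i=0}^{n−1} f(σⁱ x)`. -/
noncomputable def ergSum {𝒜 : Type*} (f : (ℕ → 𝒜) → ℝ) (n : ℕ) (x : ℕ → 𝒜) : ℝ :=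
  ∑ i ∈ Finset.range n, f (shiftMap^[i] x)

/-- `M(n,U)`: the number (in `ℕ∞`) of `n`-periodic points `x` of the shift with
`(S_n f(x), S_n g(x))` in the open rectangle `(u₁,u₂) × (u₃,u₄)`. -/
noncomputable def countM {𝒜 : Type*} (T : 𝒜 → 𝒜 → Prop)
    (f g : (ℕ → 𝒜) → ℝ) (n : ℕ) (u₁ u₂ u₃ u₄ : ℝ) : ℕ∞ :=
  {x ∈ shiftSpace T | shiftMap^[n] x = x ∧
    ergSum f n x ∈ Set.Ioo u₁ u₂ ∧ ergSum g n x ∈ Set.Ioo u₃ u₄}.encard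

/-- `W(n,U)`: the sum over all `k`-cylinders `p` (equivalently, over all words
`a` of length `k`; empty cylinders contribute `0`) of the number of
`y ∈ p ∩ σ^{−n}(z_p)` with `(S_n f(y), S_n g(y))` in the open rectangle
`(u₁,u₂) × (u₃,u₄)`. -/
noncomputable def countW {𝒜 : Type*} (T : 𝒜 → 𝒜 → Prop)
    (f g : (ℕ → 𝒜) → ℝ) (k : ℕ) (zp : (Fin k → 𝒜) → ℕ → 𝒜)
    (n : ℕ) (u₁ u₂ u₃ u₄ : ℝ) : ℕ∞ :=
  ∑' a : Fin k → 𝒜,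
    {y ∈ cylinder T k a | shiftMap^[n] y = zp a ∧
      ergSum f n y ∈ Set.Ioo u₁ u₂ ∧ ergSum g n y ∈ Set.Ioo u₃ u₄}.encard

/-!
Sort points by their first `k` letters. Inside the cylinder `[a]`, cutting an `n`-periodic point
after `n` letters and continuing with `z_a` gives a point of `[a] ∩ σ⁻ⁿ(z_a)`; conversely, repeating
the first `n` letters of a point of `[a] ∩ σ⁻ⁿ(z_a)` gives an `n`-periodic point of `[a]`. Both maps
are injective, and the new transition at the junction is admissible because all points involved
start with `a`. In both cases the two points share their first `n + k` letters, so by local Hölder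
continuity their ergodic sums differ by at most `∑_{i<n} A e^{-β(n+k-i)} ≤ ε_k`.
-/

open Set Function

lemma ENat.summable {ι : Type*} (f : ι → ℕ∞) : Summable f :=
  (hasSum_of_isLUB _ isLUB_iSup).summable

lemma ENat.toENNReal_tsum {ι : Type*} (f : ι → ℕ∞) :
    ((∑' i, f i : ℕ∞) : ENNReal) = ∑' i, (f i : ENNReal) :=
  ENat.isClosedEmbedding_toENNReal.map_tsum (g := ENat.toENNRealRingHom) f

lemma Set.encard_iUnion_eq_tsum {ι α : Type*} {s : ι → Set α} (hs : Pairwise (Disjoint on s)) :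
    (⋃ i, s i).encard = ∑' i, (s i).encard := by
  rw [← ENat.toENNReal_inj, ← ENNReal.tsum_set_one,
    ENNReal.tsum_biUnion (f := fun _ => 1) fun i _ j _ hij => hs hij, ENat.toENNReal_tsum]
  simp only [ENNReal.tsum_set_one]

lemma mem_Ioo_of_abs_sub_le {a b u v ε : ℝ} (h : |a - b| ≤ ε) (hb : b ∈ Ioo (u + ε) (v - ε)) :
    a ∈ Ioo u v := by
  obtain ⟨h₁, h₂⟩ := abs_le.mp h
  exact ⟨by linarith [hb.1], by linarith [hb.2]⟩

section Shift

variable {𝒜 : Type*} {T : 𝒜 → 𝒜 → Prop} {k n : ℕ} {a : Fin k → 𝒜} {x y z : ℕ → 𝒜}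

lemma shiftMap_iterate_apply (i : ℕ) (x : ℕ → 𝒜) (j : ℕ) : shiftMap^[i] x j = x (j + i) := by
  induction i generalizing x with
  | zero => rfl
  | succ i ih => rw [iterate_succ_apply, ih]; simp only [shiftMap, add_assoc]

lemma shiftMap_iterate_eq_iff : shiftMap^[n] x = y ↔ ∀ j, x (j + n) = y j := by
  simp only [funext_iff, shiftMap_iterate_apply]

lemma shiftMap_iterate_eq_self_iff : shiftMap^[n] x = x ↔ Periodic x n :=
  shiftMap_iterate_eq_iff

lemma shiftMap_iterate_mem_shiftSpace (hx : x ∈ shiftSpace T) (i : ℕ) :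
    shiftMap^[i] x ∈ shiftSpace T := fun j => by
  simpa only [shiftMap_iterate_apply, add_right_comm j 1 i] using hx (j + i)

lemma apply_eq_of_mem_cylinder (hx : x ∈ cylinder T k a) (hy : y ∈ cylinder T k a) {i : ℕ}
    (hi : i < k) : x i = y i :=
  (hx.2 ⟨i, hi⟩).trans (hy.2 ⟨i, hi⟩).symm

lemma mem_cylinder_of_apply_eq (hx : x ∈ shiftSpace T) (hy : y ∈ cylinder T k a)
    (hxy : ∀ i < k, x i = y i) : x ∈ cylinder T k a :=
  ⟨hx, fun i => (hxy i i.2).trans (hy.2 i)⟩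

end Shift

section Periodize

variable {𝒜 : Type*} {T : 𝒜 → 𝒜 → Prop} {k n : ℕ} {x y z : ℕ → 𝒜}

def periodize (n : ℕ) (y : ℕ → 𝒜) : ℕ → 𝒜 := fun j => y (j % n)

lemma periodize_apply_of_lt {j : ℕ} (hj : j < n) : periodize n y j = y j := by
  rw [periodize, Nat.mod_eq_of_lt hj]

lemma periodic_periodize (n : ℕ) (y : ℕ → 𝒜) : Periodic (periodize n y) n := fun j => by
  simp only [periodize, Nat.add_mod_right]

lemma Function.Periodic.periodize_eq (hx : Periodic x n) : periodize n x = x :=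
  funext fun _ => hx.map_mod_nat _

lemma periodize_mem_shiftSpace (hn : 0 < n) (hy : y ∈ shiftSpace T) (hwrap : y n = y 0) :
    periodize n y ∈ shiftSpace T := fun j => by
  have hy' := hy (j % n)
  simp only [periodize, ← Nat.mod_add_mod j n 1]
  obtain hlast | hlt : j % n + 1 = n ∨ j % n + 1 < n := by have := Nat.mod_lt j hn; omega
  · rw [hlast] at hy'
    rwa [hlast, Nat.mod_self, ← hwrap]
  · rwa [Nat.mod_eq_of_lt hlt]

lemma periodize_apply_of_lt_add (hkn : k ≤ n) (hy : ∀ i < k, y (i + n) = y i) {j : ℕ}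
    (hj : j < n + k) : periodize n y j = y j := by
  rcases lt_or_ge j n with hjn | hnj
  · exact periodize_apply_of_lt hjn
  · obtain ⟨i, rfl⟩ := Nat.exists_eq_add_of_le' hnj
    rw [periodize, Nat.add_mod_right, Nat.mod_eq_of_lt (by omega), hy i (by omega)]

lemma periodize_injOn_fiber : InjOn (periodize n) {y | shiftMap^[n] y = z} := by
  intro y hy y' hy' h
  funext j
  rcases lt_or_ge j n with hjn | hnj
  · simpa only [periodize_apply_of_lt hjn] using congrFun h j
  · obtain ⟨i, rfl⟩ := Nat.exists_eq_add_of_le' hnj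
    rw [shiftMap_iterate_eq_iff.mp hy, shiftMap_iterate_eq_iff.mp hy']

end Periodize

section Splice

variable {𝒜 : Type*} {T : 𝒜 → 𝒜 → Prop} {k n : ℕ} {x z : ℕ → 𝒜}

def splice (n : ℕ) (x z : ℕ → 𝒜) : ℕ → 𝒜 := fun j => if j < n then x j else z (j - n)

lemma splice_apply_of_lt {j : ℕ} (hj : j < n) : splice n x z j = x j := if_pos hj

lemma splice_apply_add (n i : ℕ) : splice n x z (i + n) = z i := by
  rw [splice, if_neg (by omega), Nat.add_sub_cancel]

lemma shiftMap_iterate_splice : shiftMap^[n] (splice n x z) = z :=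
  shiftMap_iterate_eq_iff.mpr (splice_apply_add n)

lemma splice_mem_shiftSpace (hx : x ∈ shiftSpace T) (hz : z ∈ shiftSpace T) (hwrap : x n = z 0) :
    splice n x z ∈ shiftSpace T := fun j => by
  rcases lt_or_ge j n with hjn | hnj
  · rw [splice_apply_of_lt hjn]
    obtain hlast | hlt : j + 1 = n ∨ j + 1 < n := by omega
    · have := hx j
      rw [hlast, hwrap] at this
      rwa [hlast, show splice n x z n = z 0 by simpa using splice_apply_add (x := x) (z := z) n 0]
    · rw [splice_apply_of_lt hlt]
      exact hx j
  · obtain ⟨i, rfl⟩ := Nat.exists_eq_add_of_le' hnj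
    rw [splice_apply_add, add_right_comm, splice_apply_add]
    exact hz i

lemma splice_apply_of_lt_add (hx : Periodic x n) (hz : ∀ i < k, z i = x i) {j : ℕ}
    (hj : j < n + k) : splice n x z j = x j := by
  rcases lt_or_ge j n with hjn | hnj
  · exact splice_apply_of_lt hjn
  · obtain ⟨i, rfl⟩ := Nat.exists_eq_add_of_le' hnj
    rw [splice_apply_add, hz i (by omega), hx i]

lemma splice_injOn_periodic (hn : 0 < n) (z : ℕ → 𝒜) :
    InjOn (splice n · z) {x | Periodic x n} := by
  intro x hx x' hx' h
  rw [← hx.periodize_eq, ← (show Periodic x' n from hx').periodize_eq]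
  funext j
  have hj := Nat.mod_lt j hn
  simpa only [periodize, splice_apply_of_lt hj] using congrFun h (j % n)

end Splice

def BoundedDistortion {𝒜 : Type*} (T : 𝒜 → 𝒜 → Prop) (f : (ℕ → 𝒜) → ℝ) (n k : ℕ) (ε : ℝ) :
    Prop :=
  ∀ x ∈ shiftSpace T, ∀ y ∈ shiftSpace T, (∀ i < n + k, x i = y i) →
    |ergSum f n x - ergSum f n y| ≤ ε

namespace LocallyHolder

variable {𝒜 : Type*} {T : 𝒜 → 𝒜 → Prop} {A β : ℝ} {f : (ℕ → 𝒜) → ℝ} {x : ℕ → 𝒜}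

lemma nonneg (hf : LocallyHolder T A β f) (hx : x ∈ shiftSpace T) : 0 ≤ A := by
  have h := hf 1 le_rfl x hx x hx fun _ _ => rfl
  rw [sub_self, abs_zero] at h
  exact nonneg_of_mul_nonneg_left h (Real.exp_pos _)

lemma boundedDistortion (hf : LocallyHolder T A β f) (hβ : 0 < β) (n k : ℕ) :
    BoundedDistortion T f n k (A * Real.exp (-β * k) / (1 - Real.exp (-β))) := by
  intro x hx y hy hxy
  set r := Real.exp (-β)
  have hr₀ : 0 < r := Real.exp_pos _
  have hr₁ : r < 1 := Real.exp_lt_one_iff.mpr (neg_neg_of_pos hβ)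
  have exp_eq_pow (m : ℕ) : Real.exp (-β * m) = r ^ m := by rw [mul_comm, Real.exp_nat_mul]
  -- the `i`-th shifts of `x` and `y` still share their first `n + k - i` letters
  have term_le (i : ℕ) (hi : i ∈ Finset.range n) :
      |f (shiftMap^[i] x) - f (shiftMap^[i] y)| ≤ A * r ^ k * r ^ (n - 1 - i) := by
    have hin := Finset.mem_range.mp hi
    calc |f (shiftMap^[i] x) - f (shiftMap^[i] y)| ≤ A * r ^ (n + k - i) := by
          rw [← exp_eq_pow]
          refine hf _ (by omega) _ (shiftMap_iterate_mem_shiftSpace hx i) _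
            (shiftMap_iterate_mem_shiftSpace hy i) fun j hj => ?_
          simpa only [shiftMap_iterate_apply] using hxy (j + i) (by omega)
      _ ≤ A * r ^ (k + (n - 1 - i)) :=
          mul_le_mul_of_nonneg_left (pow_le_pow_of_le_one hr₀.le hr₁.le (by omega))
            (hf.nonneg hx)
      _ = A * r ^ k * r ^ (n - 1 - i) := by rw [pow_add, mul_assoc]
  calc |ergSum f n x - ergSum f n y|
      ≤ ∑ i ∈ Finset.range n, |f (shiftMap^[i] x) - f (shiftMap^[i] y)| := by
        rw [ergSum, ergSum, ← Finset.sum_sub_distrib]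
        exact Finset.abs_sum_le_sum_abs _ _
    _ ≤ ∑ i ∈ Finset.range n, A * r ^ k * r ^ (n - 1 - i) := Finset.sum_le_sum term_le
    _ = A * r ^ k * ∑ i ∈ Finset.range n, r ^ i := by
        rw [← Finset.mul_sum, Finset.sum_range_reflect (r ^ ·) n]
    _ ≤ A * r ^ k * (r ^ 0 / (1 - r)) := by
        rw [Finset.range_eq_Ico]
        exact mul_le_mul_of_nonneg_left (geom_sum_Ico_le_of_lt_one hr₀.le hr₁)
          (mul_nonneg (hf.nonneg hx) (pow_nonneg hr₀.le k))
    _ = A * Real.exp (-β * k) / (1 - r) := by rw [exp_eq_pow, pow_zero, mul_one_div]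

end LocallyHolder

section Counting

variable {𝒜 : Type*} {T : 𝒜 → 𝒜 → Prop} {f g : (ℕ → 𝒜) → ℝ} {k n : ℕ} {ε : ℝ}
  {a : Fin k → 𝒜} {z : ℕ → 𝒜} {u₁ u₂ u₃ u₄ : ℝ}

lemma encard_sep_shiftSpace_eq_tsum (T : 𝒜 → 𝒜 → Prop) (k : ℕ) (P : (ℕ → 𝒜) → Prop) :
    {x ∈ shiftSpace T | P x}.encard = ∑' a : Fin k → 𝒜, {x ∈ cylinder T k a | P x}.encard := by
  rw [← encard_iUnion_eq_tsum]
  · congr 1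
    ext x
    simp only [cylinder, mem_iUnion]
    exact ⟨fun ⟨hx, hP⟩ => ⟨fun i => x i, ⟨hx, fun _ => rfl⟩, hP⟩,
      fun ⟨_, ⟨hx, _⟩, hP⟩ => ⟨hx, hP⟩⟩
  · intro a b hab
    refine disjoint_left.mpr fun x hxa hxb => hab (funext fun i => ?_)
    exact (hxa.1.2 i).symm.trans (hxb.1.2 i)

lemma encard_fiber_le_encard_periodic (hf : BoundedDistortion T f n k ε)
    (hg : BoundedDistortion T g n k ε) (hk : 0 < k) (hkn : k ≤ n)
    (hz : (cylinder T k a).Nonempty → z ∈ cylinder T k a) :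
    {y ∈ cylinder T k a | shiftMap^[n] y = z ∧
        ergSum f n y ∈ Ioo (u₁ + ε) (u₂ - ε) ∧ ergSum g n y ∈ Ioo (u₃ + ε) (u₄ - ε)}.encard ≤
      {x ∈ cylinder T k a | shiftMap^[n] x = x ∧
        ergSum f n x ∈ Ioo u₁ u₂ ∧ ergSum g n x ∈ Ioo u₃ u₄}.encard := by
  refine encard_le_encard_of_injOn ?_ (periodize_injOn_fiber.mono fun y hy => hy.2.1)
  rintro y ⟨hy, hyz, hfy, hgy⟩
  have hret : ∀ i < k, y (i + n) = y i := fun i hi =>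
    (shiftMap_iterate_eq_iff.mp hyz i).trans (apply_eq_of_mem_cylinder (hz ⟨y, hy⟩) hy hi)
  have hagree : ∀ i < n + k, periodize n y i = y i := fun i hi =>
    periodize_apply_of_lt_add hkn hret hi
  have hmem : periodize n y ∈ shiftSpace T :=
    periodize_mem_shiftSpace (by omega) hy.1 (by simpa using hret 0 hk)
  exact ⟨mem_cylinder_of_apply_eq hmem hy fun i hi => hagree i (by omega),
    shiftMap_iterate_eq_self_iff.mpr (periodic_periodize n y),
    mem_Ioo_of_abs_sub_le (hf _ hmem _ hy.1 hagree) hfy,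
    mem_Ioo_of_abs_sub_le (hg _ hmem _ hy.1 hagree) hgy⟩

lemma encard_periodic_le_encard_fiber (hf : BoundedDistortion T f n k ε)
    (hg : BoundedDistortion T g n k ε) (hk : 0 < k) (hkn : k ≤ n)
    (hz : (cylinder T k a).Nonempty → z ∈ cylinder T k a) :
    {x ∈ cylinder T k a | shiftMap^[n] x = x ∧
        ergSum f n x ∈ Ioo u₁ u₂ ∧ ergSum g n x ∈ Ioo u₃ u₄}.encard ≤
      {y ∈ cylinder T k a | shiftMap^[n] y = z ∧
        ergSum f n y ∈ Ioo (u₁ - ε) (u₂ + ε) ∧ ergSum g n y ∈ Ioo (u₃ - ε) (u₄ + ε)}.encard := by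
  refine encard_le_encard_of_injOn ?_ ((splice_injOn_periodic (by omega) z).mono
    fun x hx => shiftMap_iterate_eq_self_iff.mp hx.2.1)
  rintro x ⟨hx, hxx, hfx, hgx⟩
  have hper := shiftMap_iterate_eq_self_iff.mp hxx
  have hzx : ∀ i < k, z i = x i := fun i hi => apply_eq_of_mem_cylinder (hz ⟨x, hx⟩) hx hi
  have hagree : ∀ i < n + k, splice n x z i = x i := fun i hi =>
    splice_apply_of_lt_add hper hzx hi
  have hmem : splice n x z ∈ shiftSpace T :=
    splice_mem_shiftSpace hx.1 (hz ⟨x, hx⟩).1 (by simpa [hzx 0 hk] using hper 0)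
  exact ⟨mem_cylinder_of_apply_eq hmem hx fun i hi => hagree i (by omega),
    shiftMap_iterate_splice,
    mem_Ioo_of_abs_sub_le (hf _ hmem _ hx.1 hagree) (by simpa using hfx),
    mem_Ioo_of_abs_sub_le (hg _ hmem _ hx.1 hagree) (by simpa using hgx)⟩

end Counting

theorem stmt_14_general {𝒜 : Type*} (T : 𝒜 → 𝒜 → Prop)
    (f g : (ℕ → 𝒜) → ℝ) (A β : ℝ) (hβ : 0 < β)
    (hf : LocallyHolder T A β f) (hg : LocallyHolder T A β g)
    (k : ℕ) (hk : 1 ≤ k)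
    (zp : (Fin k → 𝒜) → ℕ → 𝒜)
    (hzp : ∀ a : Fin k → 𝒜, (cylinder T k a).Nonempty →
      zp a ∈ cylinder T k a ∧ ∀ m : ℕ, 1 ≤ m → shiftMap^[m] (zp a) ≠ zp a)
    (n : ℕ) (hn : k ≤ n) (u₁ u₂ u₃ u₄ : ℝ) :
    countW T f g k zp n
        (u₁ + A * Real.exp (-β * k) / (1 - Real.exp (-β)))
        (u₂ - A * Real.exp (-β * k) / (1 - Real.exp (-β)))
        (u₃ + A * Real.exp (-β * k) / (1 - Real.exp (-β)))
        (u₄ - A * Real.exp (-β * k) / (1 - Real.exp (-β))) ≤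
      countM T f g n u₁ u₂ u₃ u₄ ∧
    countM T f g n u₁ u₂ u₃ u₄ ≤
      countW T f g k zp n
        (u₁ - A * Real.exp (-β * k) / (1 - Real.exp (-β)))
        (u₂ + A * Real.exp (-β * k) / (1 - Real.exp (-β)))
        (u₃ - A * Real.exp (-β * k) / (1 - Real.exp (-β)))
        (u₄ + A * Real.exp (-β * k) / (1 - Real.exp (-β))) := by
  have hdf := hf.boundedDistortion hβ n k
  have hdg := hg.boundedDistortion hβ n k
  have hz (a : Fin k → 𝒜) : (cylinder T k a).Nonempty → zp a ∈ cylinder T k a :=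
    fun h => (hzp a h).1
  rw [countM, encard_sep_shiftSpace_eq_tsum T k]
  exact ⟨(ENat.summable _).tsum_le_tsum
      (fun a => encard_fiber_le_encard_periodic hdf hdg hk hn (hz a)) (ENat.summable _),
    (ENat.summable _).tsum_le_tsum
      (fun a => encard_periodic_le_encard_fiber hdf hdg hk hn (hz a)) (ENat.summable _)⟩

/-- **Proposition 4.1 (3).**  Let `f, g` be `(A,β)`-locally Hölder, `k ≥ 1`, and
for each `k`-cylinder choose a non-periodic point `z_p` in it.  With
`ε_k = A e^{−βk}/(1 − e^{−β})`, for every `n ≥ k` and every open rectangle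
`U = (u₁,u₂) × (u₃,u₄)` one has `W(n, U_{−ε_k}) ≤ M(n, U) ≤ W(n, U_{+ε_k})`. -/
theorem stmt_14 {𝒜 : Type*} [Countable 𝒜] (T : 𝒜 → 𝒜 → Prop)
    (f g : (ℕ → 𝒜) → ℝ) (A β : ℝ) (hA : 0 < A) (hβ : 0 < β)
    (hf : LocallyHolder T A β f) (hg : LocallyHolder T A β g)
    (k : ℕ) (hk : 1 ≤ k)
    (zp : (Fin k → 𝒜) → ℕ → 𝒜)
    (hzp : ∀ a : Fin k → 𝒜, (cylinder T k a).Nonempty →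
      zp a ∈ cylinder T k a ∧ ∀ m : ℕ, 1 ≤ m → shiftMap^[m] (zp a) ≠ zp a)
    (n : ℕ) (hn : k ≤ n) (u₁ u₂ u₃ u₄ : ℝ) :
    countW T f g k zp n
        (u₁ + A * Real.exp (-β * k) / (1 - Real.exp (-β)))
        (u₂ - A * Real.exp (-β * k) / (1 - Real.exp (-β)))
        (u₃ + A * Real.exp (-β * k) / (1 - Real.exp (-β)))
        (u₄ - A * Real.exp (-β * k) / (1 - Real.exp (-β))) ≤
      countM T f g n u₁ u₂ u₃ u₄ ∧
    countM T f g n u₁ u₂ u₃ u₄ ≤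
      countW T f g k zp n
        (u₁ - A * Real.exp (-β * k) / (1 - Real.exp (-β)))
        (u₂ + A * Real.exp (-β * k) / (1 - Real.exp (-β)))
        (u₃ - A * Real.exp (-β * k) / (1 - Real.exp (-β)))
        (u₄ + A * Real.exp (-β * k) / (1 - Real.exp (-β))) :=
  stmt_14_general T f g A β hβ hf hg k hk zp hzp n hn u₁ u₂ u₃ u₄
end
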